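/- A function D: I_M^L → [0,1] is an irreducible discrete copula (a discrete copula with range exactly I_M) if and only if there exists an L-dimensional permutation array A (a stochastic array with all entries in {0,1}) such that D(i₁/M,…,i_L/M) = (1/M) Σ_{ν₁≤i₁} ⋯ Σ_{ν_L≤i_L} a_{ν₁…ν_L}. -/

import Mathlib

/-!
Groundedness fixes a discrete copula on the lower faces of the grid, so `D` is recovered from
its `L`-fold differences over the unit cells by summation: `D` is the normalized cumulative sum
of the array `a_ν = M · V_D(cell ν)`. `L`-increasingness makes `a` nonnegative, and uniform
margins say exactly that every line of `a` sums to `1`. If moreover `M · D` only takes integer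
values, each `a_ν` is an integer combination of them, hence an integer in `[0, 1]`. Conversely,
`M` times a cumulative sum of a permutation array counts the ones below a grid point, so it is
an integer between `0` and `M`.
-/

open Finset

/-- The sign `(-1)^{#{ℓ : ε ℓ = false}}` appearing in `L`-fold first-order differences. -/
def boxSign {L : ℕ} (ε : Fin L → Bool) : ℝ :=
  (-1 : ℝ) ^ (Finset.univ.filter (fun ℓ => ε ℓ = false)).card

/-- `D` is a discrete copula on `I_M^L`: the lattice point `(i₁/M, …, i_L/M)` is encoded
by an index vector `i : Fin L → ℕ` with `i ℓ ≤ M`.  The conditions are: values in `[0,1]`,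
groundedness (D1), uniform margins (D2), and `L`-increasingness over unit lattice boxes (D3). -/
def IsDiscreteCopula (M L : ℕ) (D : (Fin L → ℕ) → ℝ) : Prop :=
  (∀ i : Fin L → ℕ, (∀ ℓ, i ℓ ≤ M) → D i ∈ Set.Icc (0 : ℝ) 1) ∧
  (∀ i : Fin L → ℕ, (∀ ℓ, i ℓ ≤ M) → (∃ ℓ, i ℓ = 0) → D i = 0) ∧
  (∀ ℓ : Fin L, ∀ k : ℕ, k ≤ M →
    D (fun l => if l = ℓ then k else M) = (k : ℝ) / M) ∧
  (∀ i : Fin L → ℕ, (∀ ℓ, 1 ≤ i ℓ ∧ i ℓ ≤ M) →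
    0 ≤ ∑ ε : Fin L → Bool,
        boxSign ε * D (fun ℓ => if ε ℓ then i ℓ else i ℓ - 1))

/-- An irreducible discrete copula: a discrete copula whose range on the lattice is exactly
`I_M = {0, 1/M, …, 1}`. -/
def IsIrreducibleDiscreteCopula (M L : ℕ) (D : (Fin L → ℕ) → ℝ) : Prop :=
  IsDiscreteCopula M L D ∧
  (∀ i : Fin L → ℕ, (∀ ℓ, i ℓ ≤ M) → ∃ k ≤ M, D i = (k : ℝ) / M) ∧
  (∀ k : ℕ, k ≤ M → ∃ i : Fin L → ℕ, (∀ ℓ, i ℓ ≤ M) ∧ D i = (k : ℝ) / M)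

/-- An `L`-dimensional stochastic array of order `M`: nonnegative entries (indexed by
`ν : Fin L → Fin M`, where `ν ℓ` encodes the index `ν ℓ + 1 ∈ {1,…,M}`), and every line sum
(fixing one index and summing over the others) equals `1`. -/
def IsStochasticArray (M L : ℕ) (A : (Fin L → Fin M) → ℝ) : Prop :=
  (∀ ν, 0 ≤ A ν) ∧
  (∀ ℓ : Fin L, ∀ j : Fin M,
    ∑ ν : Fin L → Fin M, (if ν ℓ = j then A ν else 0) = 1)

/-- A permutation array: a stochastic array all of whose entries lie in `{0, 1}`. -/
def IsPermutationArray (M L : ℕ) (A : (Fin L → Fin M) → ℝ) : Prop :=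
  IsStochasticArray M L A ∧ ∀ ν, A ν = 0 ∨ A ν = 1

/-- The normalized cumulative sum `(1/M) Σ_{ν₁ ≤ i₁} ⋯ Σ_{ν_L ≤ i_L} a_{ν₁…ν_L}`
(with `ν ℓ + 1 ≤ i ℓ` in the `Fin M` encoding; empty sums are zero). -/
noncomputable def cumSum (M L : ℕ) (A : (Fin L → Fin M) → ℝ) (i : Fin L → ℕ) : ℝ :=
  (1 / (M : ℝ)) * ∑ ν : Fin L → Fin M, (if ∀ ℓ, (ν ℓ : ℕ) < i ℓ then A ν else 0)

variable {M L : ℕ}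

def boxCorner (i : Fin L → ℕ) (ε : Fin L → Bool) : Fin L → ℕ :=
  fun ℓ => if ε ℓ then i ℓ else i ℓ - 1

/-- The `F`-volume `V_F` of the unit box `[i - 1, i]`. -/
def boxDiff (F : (Fin L → ℕ) → ℝ) (i : Fin L → ℕ) : ℝ :=
  ∑ ε : Fin L → Bool, boxSign ε * F (boxCorner i ε)

def upperCorner (ν : Fin L → Fin M) : Fin L → ℕ :=
  fun ℓ => ν ℓ + 1

lemma boxSign_eq_prod (ε : Fin L → Bool) :
    boxSign ε = ∏ ℓ, if ε ℓ then (1 : ℝ) else -1 := by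
  rw [boxSign, prod_ite, prod_const_one, one_mul, prod_const]
  simp

lemma boxDiff_prod (f : Fin L → ℕ → ℝ) (i : Fin L → ℕ) :
    boxDiff (fun j => ∏ ℓ, f ℓ (j ℓ)) i = ∏ ℓ, (f ℓ (i ℓ) - f ℓ (i ℓ - 1)) := by
  have hfactor : ∀ ℓ, f ℓ (i ℓ) - f ℓ (i ℓ - 1)
      = ∑ b : Bool, (if b then (1 : ℝ) else -1) * f ℓ (if b then i ℓ else i ℓ - 1) := by
    intro ℓ
    rw [Fintype.sum_bool]
    simp only [if_true, Bool.false_eq_true, if_false]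
    ring
  simp_rw [hfactor, Fintype.prod_sum, boxDiff, boxSign_eq_prod, ← prod_mul_distrib, boxCorner]

lemma boxDiff_sub (F G : (Fin L → ℕ) → ℝ) (i : Fin L → ℕ) :
    boxDiff (fun j => F j - G j) i = boxDiff F i - boxDiff G i := by
  simp only [boxDiff, mul_sub, sum_sub_distrib]

lemma boxDiff_sum_mul {ι : Type*} [Fintype ι] (c : ι → ℝ) (G : ι → (Fin L → ℕ) → ℝ)
    (i : Fin L → ℕ) :
    boxDiff (fun j => ∑ μ, c μ * G μ j) i = ∑ μ, c μ * boxDiff (G μ) i := by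
  simp only [boxDiff, mul_sum]
  rw [sum_comm]
  exact sum_congr rfl fun _ _ => sum_congr rfl fun _ _ => mul_left_comm _ _ _

lemma boxCorner_le (i : Fin L → ℕ) (ε : Fin L → Bool) (ℓ : Fin L) : boxCorner i ε ℓ ≤ i ℓ := by
  unfold boxCorner
  split <;> omega

lemma boxDiff_congr {F G : (Fin L → ℕ) → ℝ} (h : ∀ j, (∀ ℓ, j ℓ ≤ M) → F j = G j)
    {i : Fin L → ℕ} (hi : ∀ ℓ, i ℓ ≤ M) : boxDiff F i = boxDiff G i :=
  sum_congr rfl fun ε _ => by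
    rw [h _ fun ℓ => (boxCorner_le i ε ℓ).trans (hi ℓ)]

lemma exists_upperCorner_eq {i : Fin L → ℕ} (hi : ∀ ℓ, 1 ≤ i ℓ ∧ i ℓ ≤ M) :
    ∃ ν : Fin L → Fin M, upperCorner ν = i :=
  ⟨fun ℓ => ⟨i ℓ - 1, by have := hi ℓ; omega⟩, funext fun ℓ => by
    simp only [upperCorner]; have := hi ℓ; omega⟩

lemma boxDiff_eq_self {F : (Fin L → ℕ) → ℝ} {i : Fin L → ℕ}
    (hlower : ∀ ε, ε ≠ (fun _ => true) → F (boxCorner i ε) = 0) : boxDiff F i = F i := by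
  rw [boxDiff, sum_eq_single (fun _ => true) (fun ε _ hε => by rw [hlower ε hε, mul_zero])
    (fun h => absurd (mem_univ _) h)]
  simp [boxSign, show boxCorner i (fun _ => true) = i from rfl]

lemma sum_boxCorner_lt {i : Fin L → ℕ} (hi : ∀ ℓ, 1 ≤ i ℓ) {ε : Fin L → Bool}
    (hε : ε ≠ fun _ => true) : ∑ ℓ, boxCorner i ε ℓ < ∑ ℓ, i ℓ := by
  obtain ⟨ℓ, hℓ⟩ : ∃ ℓ, ε ℓ = false := by
    by_contra! h
    exact hε (funext fun ℓ => by simpa using h ℓ)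
  refine sum_lt_sum (fun ℓ _ => boxCorner_le i ε ℓ) ⟨ℓ, mem_univ ℓ, ?_⟩
  simp only [boxCorner, hℓ, Bool.false_eq_true, if_false]
  have := hi ℓ
  omega

lemma eq_zero_of_boxDiff_eq_zero {F : (Fin L → ℕ) → ℝ}
    (hground : ∀ i : Fin L → ℕ, (∀ ℓ, i ℓ ≤ M) → (∃ ℓ, i ℓ = 0) → F i = 0)
    (hbox : ∀ ν : Fin L → Fin M, boxDiff F (upperCorner ν) = 0) :
    ∀ i : Fin L → ℕ, (∀ ℓ, i ℓ ≤ M) → F i = 0 := by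
  intro i hi
  induction hn : ∑ ℓ, i ℓ using Nat.strong_induction_on generalizing i with
  | _ n ih =>
    by_cases hzero : ∃ ℓ, i ℓ = 0
    · exact hground i hi hzero
    simp only [not_exists] at hzero
    have hpos : ∀ ℓ, 1 ≤ i ℓ := fun ℓ => Nat.one_le_iff_ne_zero.2 (hzero ℓ)
    obtain ⟨ν, rfl⟩ := exists_upperCorner_eq fun ℓ => ⟨hpos ℓ, hi ℓ⟩
    rw [← hbox ν, boxDiff_eq_self]
    intro ε hε
    exact ih _ (hn ▸ sum_boxCorner_lt hpos hε) _
      (fun ℓ => (boxCorner_le _ ε ℓ).trans (hi ℓ)) rfl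

lemma cumSum_eq_sum_prod (A : (Fin L → Fin M) → ℝ) (i : Fin L → ℕ) :
    cumSum M L A i = ∑ μ, A μ / M * ∏ ℓ, if (μ ℓ : ℕ) < i ℓ then (1 : ℝ) else 0 := by
  simp only [cumSum, Fintype.prod_boole, mul_sum]
  refine sum_congr rfl fun μ _ => ?_
  split_ifs <;> ring

lemma boxDiff_cumSum (A : (Fin L → Fin M) → ℝ) (ν : Fin L → Fin M) :
    boxDiff (cumSum M L A) (upperCorner ν) = A ν / M := by
  have hcell : ∀ μ : Fin L → Fin M, ∏ ℓ, ((if (μ ℓ : ℕ) < ν ℓ + 1 then (1 : ℝ) else 0) -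
      if (μ ℓ : ℕ) < ν ℓ + 1 - 1 then 1 else 0) = if μ = ν then 1 else 0 := by
    intro μ
    calc _ = ∏ ℓ, if μ ℓ = ν ℓ then (1 : ℝ) else 0 := prod_congr rfl fun ℓ _ => by
          simp only [Fin.ext_iff]
          split_ifs <;> first | omega | ring
      _ = _ := by simp only [Fintype.prod_boole, funext_iff]; congr
  calc boxDiff (cumSum M L A) (upperCorner ν)
      = ∑ μ, A μ / M *
          boxDiff (fun i => ∏ ℓ, if (μ ℓ : ℕ) < i ℓ then (1 : ℝ) else 0) (upperCorner ν) := by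
        rw [← boxDiff_sum_mul]
        exact congrArg (boxDiff · _) (funext (cumSum_eq_sum_prod A))
    _ = ∑ μ, A μ / M * if μ = ν then 1 else 0 := sum_congr rfl fun μ _ => by
        rw [boxDiff_prod (fun ℓ n => if (μ ℓ : ℕ) < n then (1 : ℝ) else 0)]
        exact congrArg _ (hcell μ)
    _ = A ν / M := by simp

lemma cumSum_eq_zero_of_exists_eq_zero (A : (Fin L → Fin M) → ℝ) {i : Fin L → ℕ}
    (hi : ∃ ℓ, i ℓ = 0) : cumSum M L A i = 0 := by
  obtain ⟨ℓ, hℓ⟩ := hi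
  rw [cumSum, sum_eq_zero fun ν _ => if_neg fun h => by simpa [hℓ] using h ℓ, mul_zero]

lemma cumSum_margin (A : (Fin L → Fin M) → ℝ) (ℓ : Fin L) (k : ℕ) :
    cumSum M L A (fun l => if l = ℓ then k else M) =
      (∑ ν, if (ν ℓ : ℕ) < k then A ν else 0) / M := by
  rw [cumSum, one_div_mul_eq_div]
  congr 1
  refine sum_congr rfl fun ν _ => if_congr ⟨fun h => by simpa using h ℓ, fun h l => ?_⟩ rfl rfl
  by_cases hl : l = ℓ
  · subst hl; simpa using h
  · simp [hl]

lemma sum_lt_succ_eq (A : (Fin L → Fin M) → ℝ) (ℓ : Fin L) (j : Fin M) :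
    ∑ ν, (if (ν ℓ : ℕ) < j + 1 then A ν else 0) =
      (∑ ν, if (ν ℓ : ℕ) < j then A ν else 0) + ∑ ν, if ν ℓ = j then A ν else 0 := by
  rw [← sum_add_distrib]
  refine sum_congr rfl fun ν _ => ?_
  simp only [Fin.ext_iff]
  split_ifs <;> first | omega | ring

lemma lineSum_eq_one_iff (A : (Fin L → Fin M) → ℝ) (ℓ : Fin L) :
    (∀ j : Fin M, ∑ ν, (if ν ℓ = j then A ν else 0) = 1) ↔
      ∀ k ≤ M, ∑ ν, (if (ν ℓ : ℕ) < k then A ν else 0) = k := by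
  constructor
  · intro hline k hk
    induction k with
    | zero => simp
    | succ k ih =>
      have := sum_lt_succ_eq A ℓ ⟨k, hk⟩
      simp only at this
      rw [this, ih (by omega), hline]
      push_cast
      ring
  · intro hpartial j
    have := sum_lt_succ_eq A ℓ j
    rw [hpartial _ j.isLt, hpartial _ j.is_le'] at this
    push_cast at this
    linarith

namespace IsStochasticArray

variable {A : (Fin L → Fin M) → ℝ}

lemma sum_lt_eq (hA : IsStochasticArray M L A) (ℓ : Fin L) {k : ℕ} (hk : k ≤ M) :
    ∑ ν, (if (ν ℓ : ℕ) < k then A ν else 0) = k :=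
  (lineSum_eq_one_iff A ℓ).1 (hA.2 ℓ) k hk

lemma sum_eq (hA : IsStochasticArray M L A) (ℓ : Fin L) : ∑ ν, A ν = M := by
  simpa using hA.sum_lt_eq ℓ le_rfl

lemma le_one (hA : IsStochasticArray M L A) (hL : 0 < L) (ν : Fin L → Fin M) : A ν ≤ 1 := by
  let ℓ : Fin L := ⟨0, hL⟩
  calc A ν = if ν ℓ = ν ℓ then A ν else 0 := (if_pos rfl).symm
    _ ≤ ∑ μ, if μ ℓ = ν ℓ then A μ else 0 :=
        single_le_sum (f := fun μ => if μ ℓ = ν ℓ then A μ else 0)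
          (fun μ _ => by split_ifs; exacts [hA.1 μ, le_rfl]) (mem_univ ν)
    _ = 1 := hA.2 ℓ (ν ℓ)

end IsStochasticArray

lemma exists_intCast_mul_boxDiff {F : (Fin L → ℕ) → ℝ} {i : Fin L → ℕ} {c : ℝ}
    (h : ∀ ε, ∃ z : ℤ, c * F (boxCorner i ε) = z) : ∃ z : ℤ, c * boxDiff F i = z := by
  rw [boxDiff, mul_sum]
  refine sum_induction _ (fun y : ℝ => ∃ z : ℤ, y = z)
    (fun _ _ ⟨m, hm⟩ ⟨n, hn⟩ => ⟨m + n, by rw [hm, hn]; push_cast; ring⟩) ⟨0, by simp⟩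
    fun ε _ => ?_
  obtain ⟨z, hz⟩ := h ε
  exact ⟨(-1) ^ (univ.filter fun ℓ => ε ℓ = false).card * z, by
    rw [mul_left_comm, hz, boxSign]; push_cast; ring⟩

noncomputable def copulaArray (M : ℕ) (D : (Fin L → ℕ) → ℝ) (ν : Fin L → Fin M) : ℝ :=
  M * boxDiff D (upperCorner ν)

namespace IsDiscreteCopula

variable {D : (Fin L → ℕ) → ℝ}

lemma copulaArray_nonneg (hD : IsDiscreteCopula M L D) (ν : Fin L → Fin M) :
    0 ≤ copulaArray M D ν :=
  mul_nonneg (Nat.cast_nonneg M) (hD.2.2.2 _ fun ℓ => ⟨Nat.le_add_left 1 _, (ν ℓ).isLt⟩)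

lemma eq_cumSum_copulaArray (hM : 0 < M) (hD : IsDiscreteCopula M L D) {i : Fin L → ℕ}
    (hi : ∀ ℓ, i ℓ ≤ M) : D i = cumSum M L (copulaArray M D) i := by
  refine sub_eq_zero.1 (eq_zero_of_boxDiff_eq_zero
    (F := fun j => D j - cumSum M L (copulaArray M D) j) (fun j hj hzero => ?_) (fun ν => ?_) i hi)
  · simp only [hD.2.1 j hj hzero, cumSum_eq_zero_of_exists_eq_zero _ hzero, sub_zero]
  · rw [boxDiff_sub, boxDiff_cumSum, copulaArray, mul_div_cancel_left₀ _ (by positivity), sub_self]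

lemma isStochasticArray_copulaArray (hM : 0 < M) (hD : IsDiscreteCopula M L D) :
    IsStochasticArray M L (copulaArray M D) := by
  refine ⟨hD.copulaArray_nonneg, fun ℓ => (lineSum_eq_one_iff _ ℓ).2 fun k hk => ?_⟩
  have hmargin := hD.2.2.1 ℓ k hk
  rw [hD.eq_cumSum_copulaArray hM fun l => by split_ifs <;> omega, cumSum_margin] at hmargin
  exact (div_left_inj' (by positivity)).1 hmargin

lemma copulaArray_eq_zero_or_one (hM : 0 < M) (hL : 0 < L) (hD : IsDiscreteCopula M L D)
    (hrange : ∀ i : Fin L → ℕ, (∀ ℓ, i ℓ ≤ M) → ∃ k ≤ M, D i = (k : ℝ) / M)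
    (ν : Fin L → Fin M) : copulaArray M D ν = 0 ∨ copulaArray M D ν = 1 := by
  obtain ⟨z, hz⟩ : ∃ z : ℤ, copulaArray M D ν = z := exists_intCast_mul_boxDiff fun ε => by
    obtain ⟨k, -, hk⟩ := hrange _ fun ℓ => (boxCorner_le (upperCorner ν) ε ℓ).trans (ν ℓ).isLt
    exact ⟨k, by rw [hk, mul_div_cancel₀ _ (by positivity)]; rfl⟩
  have h0 : (0 : ℤ) ≤ z := by exact_mod_cast hz ▸ hD.copulaArray_nonneg ν
  have h1 : z ≤ 1 := by exact_mod_cast hz ▸ (hD.isStochasticArray_copulaArray hM).le_one hL ν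
  rcases (by omega : z = 0 ∨ z = 1) with rfl | rfl <;> simp [hz]

end IsDiscreteCopula

lemma IsIrreducibleDiscreteCopula.congr {D D' : (Fin L → ℕ) → ℝ}
    (h : ∀ i : Fin L → ℕ, (∀ ℓ, i ℓ ≤ M) → D i = D' i) (hD : IsIrreducibleDiscreteCopula M L D) :
    IsIrreducibleDiscreteCopula M L D' := by
  obtain ⟨⟨hval, hground, hmargin, hbox⟩, hrange, hsurj⟩ := hD
  refine ⟨⟨fun i hi => ?_, fun i hi hzero => ?_, fun ℓ k hk => ?_, fun i hi => ?_⟩,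
    fun i hi => ?_, fun k hk => ?_⟩
  · exact h i hi ▸ hval i hi
  · exact h i hi ▸ hground i hi hzero
  · rw [← h _ fun l => by split_ifs <;> omega]
    exact hmargin ℓ k hk
  · show 0 ≤ boxDiff D' i
    rw [← boxDiff_congr h fun ℓ => (hi ℓ).2]
    exact hbox i hi
  · exact h i hi ▸ hrange i hi
  · obtain ⟨i, hi, hk⟩ := hsurj k hk
    exact ⟨i, hi, h i hi ▸ hk⟩

lemma exists_natCast_sum_of_zero_or_one {ι : Type*} (s : Finset ι) (f : ι → ℝ)
    (hf : ∀ x ∈ s, f x = 0 ∨ f x = 1) : ∃ n : ℕ, ∑ x ∈ s, f x = n :=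
  sum_induction f (fun y : ℝ => ∃ n : ℕ, y = n)
    (fun _ _ ⟨m, hm⟩ ⟨n, hn⟩ => ⟨m + n, by rw [hm, hn]; push_cast; ring⟩) ⟨0, by simp⟩
    fun x hx => (hf x hx).elim (fun h => ⟨0, by simp [h]⟩) fun h => ⟨1, by simp [h]⟩

namespace IsPermutationArray

variable {A : (Fin L → Fin M) → ℝ}

lemma exists_cumSum_eq (hA : IsPermutationArray M L A) (hL : 0 < L) (i : Fin L → ℕ) :
    ∃ k ≤ M, cumSum M L A i = (k : ℝ) / M := by
  obtain ⟨k, hk⟩ := exists_natCast_sum_of_zero_or_one univ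
    (fun ν => if ∀ ℓ, (ν ℓ : ℕ) < i ℓ then A ν else 0) fun ν _ => by
      split_ifs
      exacts [hA.2 ν, Or.inl rfl]
  refine ⟨k, ?_, by rw [cumSum, hk, one_div_mul_eq_div]⟩
  have hle : (k : ℝ) ≤ M := calc
    (k : ℝ) = ∑ ν, if ∀ ℓ, (ν ℓ : ℕ) < i ℓ then A ν else 0 := hk.symm
    _ ≤ ∑ ν, A ν := sum_le_sum fun ν _ => by
        split_ifs
        exacts [le_rfl, hA.1.1 ν]
    _ = M := hA.1.sum_eq ⟨0, hL⟩
  exact_mod_cast hle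

lemma isIrreducibleDiscreteCopula_cumSum (hA : IsPermutationArray M L A) (hL : 0 < L) :
    IsIrreducibleDiscreteCopula M L (cumSum M L A) := by
  have hmargin : ∀ ℓ : Fin L, ∀ k ≤ M,
      cumSum M L A (fun l => if l = ℓ then k else M) = (k : ℝ) / M := fun ℓ k hk => by
    rw [cumSum_margin, hA.1.sum_lt_eq ℓ hk]
  refine ⟨⟨fun i _ => ?_, fun i _ hzero => cumSum_eq_zero_of_exists_eq_zero A hzero, hmargin,
    fun i hi => ?_⟩, fun i _ => hA.exists_cumSum_eq hL i, fun k hk => ?_⟩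
  · obtain ⟨k, hk, hcum⟩ := hA.exists_cumSum_eq hL i
    rw [hcum]
    exact ⟨by positivity, div_le_one_of_le₀ (by exact_mod_cast hk) (Nat.cast_nonneg M)⟩
  · obtain ⟨ν, rfl⟩ := exists_upperCorner_eq hi
    show 0 ≤ boxDiff (cumSum M L A) (upperCorner ν)
    rw [boxDiff_cumSum]
    exact div_nonneg (hA.1.1 ν) (Nat.cast_nonneg M)
  · exact ⟨fun l => if l = ⟨0, hL⟩ then k else M, fun l => by dsimp only; split_ifs <;> omega,
      hmargin _ k hk⟩

end IsPermutationArray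

/-- `D` is an irreducible discrete copula iff it is the cumulative sum of some
`L`-dimensional permutation array. -/
theorem irreducibleDiscreteCopula_iff_permutationArray (M L : ℕ) (hM : 0 < M) (hL : 2 ≤ L)
    (D : (Fin L → ℕ) → ℝ) :
    IsIrreducibleDiscreteCopula M L D ↔
      ∃ A : (Fin L → Fin M) → ℝ, IsPermutationArray M L A ∧
        ∀ i : Fin L → ℕ, (∀ ℓ, i ℓ ≤ M) → D i = cumSum M L A i := by
  have hL_pos : 0 < L := by omega
  constructor
  · rintro ⟨hD, hrange, -⟩
    exact ⟨copulaArray M D,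
      ⟨hD.isStochasticArray_copulaArray hM, hD.copulaArray_eq_zero_or_one hM hL_pos hrange⟩,
      fun i hi => hD.eq_cumSum_copulaArray hM hi⟩
  · rintro ⟨A, hA, hDA⟩
    exact (hA.isIrreducibleDiscreteCopula_cumSum hL_pos).congr fun i hi => (hDA i hi).symm
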